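/- Let u, v, w be 012-strings for Fl(a,b;n) and let P be an equivariant puzzle for Fl(a,b;n) with boundary Δ^{u,v}_w. Then Σ_{s} A_T(s) = C_u ζ^{11} + C_v ζ^{7} + C_w ζ^{3} in ℂ[δ₀,δ₁,δ₂,y₁,…,y_n], where the sum is over all vertical scabs s in P. -/

import Mathlib

/-!
STATEMENT 16: Let u, v, w be 012-strings for Fl(a,b;n) and P an equivariant
puzzle with boundary Δ^{u,v}_w.  Then the sum of the equivariant auras of
the vertical scabs of P equals C_u ζ^{11} + C_v ζ^{7} + C_w ζ^{3} in
ℂ[δ₀,δ₁,δ₂,y₁,…,y_n].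
-/

set_option maxHeartbeats 1000000

open scoped Classical

/-- Puzzle labels are encoded as natural numbers; the meaningful ones are
0–7, and 0, 1, 2 are the *simple* labels. -/
abbrev Label := ℕ

/-- The valid upward triangular puzzle pieces in standard position,
as (left, right, bottom) label triples. -/
def basePieces : List (Label × Label × Label) :=
  [(0,0,0), (1,1,1), (2,2,2), (0,1,3), (1,2,4), (0,2,5), (3,2,6), (0,4,7)]

/-- Valid upward triangular pieces: the base list together with its
120° and 240° rotations. -/
def ValidUp (l r b : Label) : Prop :=
  (l, r, b) ∈ basePieces ∨ (r, b, l) ∈ basePieces ∨ (b, l, r) ∈ basePieces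

/-- Valid downward triangular pieces, with (left, right, top) labels:
precisely the rotations (by 60°, 180° or 300°) of valid upward pieces. -/
def ValidDown (l r t : Label) : Prop := ValidUp r l t

/-- Valid *vertical* equivariant (rhombus) puzzle pieces: opposite sides
carry equal labels, and `ValidEquivVert p q` means that the NW and SE sides
carry `p` while the NE and SW sides carry `q`, where `(p, q)` runs through
the paper's list of label pairs in its fixed orientation. -/
def ValidEquivVert (p q : Label) : Prop :=
  (p, q) ∈ ([(0,1), (1,2), (0,2), (2,3), (0,4), (3,4), (0,6), (2,7)] :
    List (Label × Label))

/-- `s` (restricted to indices `0, …, n-1`) is a 012-string for `Fl(a,b;n)`: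
exactly `a` zeros, `b - a` ones and `n - b` twos. -/
def Is012 (n a b : ℕ) (s : ℕ → ℕ) : Prop :=
  (∀ i, i < n → s i < 3) ∧
  ((Finset.range n).filter fun i => s i = 0).card = a ∧
  ((Finset.range n).filter fun i => s i = 1).card = b - a ∧
  ((Finset.range n).filter fun i => s i = 2).card = n - b

/-- An equivariant puzzle for `Fl(a,b;n)` (an upward triangle of size `n`,
all equivariant pieces vertical), encoded through its dissection into `n`
bottom-row triangles and `n(n-1)/2` small vertical rhombi.  We use skewed
coordinates: `ne x y` is the label of the SW–NE edge from `(x, y)` to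
`(x, y+1)` (the left side of the upward cell `(x, y)`), `nw x y` the label
of the NW–SE edge from `(x+1, y)` to `(x, y+1)` (its right side), and
`hl x y` the label of the horizontal edge from `(x, y)` to `(x+1, y)` (its
bottom side; this value is meaningless when the vertical rhombus containing
it is an equivariant piece).  `isEq x y` records whether the vertical
rhombus whose upward half is the cell `(x, y)` (for `1 ≤ y`,
`x + y < n`) is an equivariant puzzle piece; otherwise this rhombus consists
of two triangular pieces.  The left, right and bottom border segments are
formed by the edges `ne 0 i`, `nw i (n-1-i)` and `hl i 0` for `i < n`. -/
structure EqvPuzzle (n : ℕ) where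
  ne : ℕ → ℕ → Label
  nw : ℕ → ℕ → Label
  hl : ℕ → ℕ → Label
  isEq : ℕ → ℕ → Bool
  bottom_valid : ∀ x, x < n → ValidUp (ne x 0) (nw x 0) (hl x 0)
  rhombus_equiv : ∀ x y, 1 ≤ y → x + y < n → isEq x y = true →
    ne x y = ne (x+1) (y-1) ∧ nw x y = nw x (y-1) ∧
    ValidEquivVert (ne x y) (nw x y)
  rhombus_tri : ∀ x y, 1 ≤ y → x + y < n → isEq x y = false →
    ValidUp (ne x y) (nw x y) (hl x y) ∧
    ValidDown (nw x (y-1)) (ne (x+1) (y-1)) (hl x y)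
  boundary_simple :
    (∀ i, i < n → ne 0 i < 3) ∧ (∀ i, i < n → nw i (n-1-i) < 3) ∧
    (∀ i, i < n → hl i 0 < 3)

/-- `P` has boundary `△^{u,v}_w`: `u`, `v` and `w` are the strings of labels
on the left, right and bottom border segments, all read in left-to-right
order (bottom-to-top on the left border, top-to-bottom on the right one). -/
def HasBoundary {n : ℕ} (P : EqvPuzzle n) (u v w : ℕ → ℕ) : Prop :=
  (∀ i, i < n → P.ne 0 i = u i) ∧
  (∀ i, i < n → P.nw i (n-1-i) = v i) ∧
  (∀ i, i < n → P.hl i 0 = w i)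

/-- The ring ℂ[δ₀,δ₁,δ₂,y₁,…,y_n]. -/
abbrev ERng (n : ℕ) := MvPolynomial (Fin 3 ⊕ Fin n) ℂ

/-- ζ = exp(π i / 6). -/
noncomputable def zet : ℂ := Complex.exp ((Real.pi : ℂ) * Complex.I / 6)

/-- The δ-variable attached to a simple label. -/
noncomputable def dvarE (n : ℕ) (a : ℕ) : ERng n :=
  if h : a < 3 then MvPolynomial.X (Sum.inl (⟨a, h⟩ : Fin 3)) else 0

/-- The variable y_k (0-indexed; `0` outside the range). -/
noncomputable def yvarE (n : ℕ) (k : ℕ) : ERng n :=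
  if h : k < n then MvPolynomial.X (Sum.inr (⟨k, h⟩ : Fin n)) else 0

/-- C_u = Σ_i δ_{u_i} y_i. -/
noncomputable def CstrE (n : ℕ) (s : ℕ → ℕ) : ERng n :=
  ∑ i ∈ Finset.range n, dvarE n (s i) * yvarE n i

/-- `A k a` is the aura of a semi-labeled edge carrying the label `a`, whose
unit normal `zet ^ (2k+1)` points to the side of the label; for a simple
label it is `δ_a` times this unit normal. -/
def AuraSimpleE (n : ℕ) (A : Fin 6 → ℕ → ERng n) : Prop :=
  ∀ (k : Fin 6) (a : ℕ), a < 3 →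
    A k a = MvPolynomial.C (zet ^ (2 * (k : ℕ) + 1)) * dvarE n a

/-- For every valid triangular puzzle piece the auras of its three sides,
labels placed inside, sum to zero (upward and downward rotations). -/
def AuraPieceE (n : ℕ) (A : Fin 6 → ℕ → ERng n) : Prop :=
  ∀ l r b, ValidUp l r b →
    A 5 l + A 3 r + A 1 b = 0 ∧ A 0 r + A 2 l + A 4 b = 0

/-- The equivariant aura of the vertical rhombus of `P` whose upward half is
the cell `(x, y)`: the sum over the six sides of its two triangular pieces,
with labels placed inside, of `weight(e) · A(e)`.  Edges parallel to the
left border have weight `y_{x+y}`, edges parallel to the right border have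
weight `y_x`, bottom border edges `y_x`, other horizontal edges `0`. -/
noncomputable def ATscab {n : ℕ} (P : EqvPuzzle n) (A : Fin 6 → ℕ → ERng n)
    (x y : ℕ) : ERng n :=
  yvarE n (x + y) * A 5 (P.ne x y) + yvarE n x * A 3 (P.nw x y) +
    (if y = 0 then yvarE n x else 0) * A 1 (P.hl x y) +
    yvarE n x * A 0 (P.nw x (y-1)) + yvarE n (x + y) * A 2 (P.ne (x+1) (y-1)) +
    (if y = 0 then yvarE n x else 0) * A 4 (P.hl x y)

/-- The vertical rhombus of `P` at `(x, y)` is a (vertical) scab: two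
triangular pieces that are not 180°-rotations of each other. -/
def IsScabAt {n : ℕ} (P : EqvPuzzle n) (x y : ℕ) : Prop :=
  1 ≤ y ∧ x + y < n ∧ P.isEq x y = false ∧
    ¬ (P.ne (x+1) (y-1) = P.ne x y ∧ P.nw x (y-1) = P.nw x y)

/-!
The two triangles on either side of an edge see its aura with opposite signs: for simple labels
because ζ⁶ = -1, for composed ones because adding the up- and down-piece relations of the three
rotations of a piece propagates this from two labels of the piece to the third. Hence the
equivariant aura of a scab is the difference of the weighted auras of opposite sides of its
rhombus, a difference that vanishes on the other vertical rhombi, whose opposite sides carry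
equal labels. These differences telescope along the lines parallel to the left border
(weight `y_{x+y}`) and to the right border (weight `y_x`), leaving the auras of the left
and right borders minus those of the bottom row, which the bottom-row triangles convert into
the auras of the bottom border.
-/

open Finset

lemma zet_pow_six : zet ^ 6 = -1 := by
  rw [zet, ← Complex.exp_nat_mul, ← Complex.exp_pi_mul_I]
  congr 1
  push_cast
  ring

lemma ValidUp.rotate {l r b : Label} (h : ValidUp l r b) : ValidUp r b l := by
  unfold ValidUp at *
  tauto

lemma le_seven_of_mem_basePieces : ∀ t ∈ basePieces, t.1 ≤ 7 ∧ t.2.1 ≤ 7 ∧ t.2.2 ≤ 7 := by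
  decide

lemma ValidUp.le_seven {l r b : Label} (h : ValidUp l r b) : l ≤ 7 ∧ r ≤ 7 ∧ b ≤ 7 := by
  rcases h with h | h | h
  · exact le_seven_of_mem_basePieces _ h
  · obtain ⟨hr, hb, hl⟩ := le_seven_of_mem_basePieces _ h
    exact ⟨hl, hr, hb⟩
  · obtain ⟨hb, hl, hr⟩ := le_seven_of_mem_basePieces _ h
    exact ⟨hl, hr, hb⟩

section Aura

variable {n : ℕ} {A : Fin 6 → ℕ → ERng n}

def AuraOddAt (A : Fin 6 → ℕ → ERng n) (a : Label) : Prop :=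
  A 5 a + A 2 a = 0 ∧ A 3 a + A 0 a = 0 ∧ A 1 a + A 4 a = 0

lemma auraOddAt_of_lt_three (hA : AuraSimpleE n A) {a : Label} (ha : a < 3) :
    AuraOddAt A a := by
  have hz : (MvPolynomial.C zet : ERng n) ^ 6 = -1 := by
    rw [← map_pow, zet_pow_six, map_neg, map_one]
  simp only [AuraOddAt, hA _ a ha, map_pow, Fin.isValue, Fin.coe_ofNat_eq_mod, Nat.reduceMod,
    Nat.reduceMul, Nat.reduceAdd]
  refine ⟨?_, ?_, ?_⟩
  · linear_combination dvarE n a * MvPolynomial.C zet ^ 5 * hz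
  · linear_combination dvarE n a * MvPolynomial.C zet * hz
  · linear_combination dvarE n a * MvPolynomial.C zet ^ 3 * hz

lemma AuraPieceE.opposite_sum_eq_zero (hp : AuraPieceE n A) {l r b : Label}
    (h : ValidUp l r b) : (A 5 l + A 2 l) + (A 3 r + A 0 r) + (A 1 b + A 4 b) = 0 := by
  obtain ⟨hup, hdown⟩ := hp l r b h
  linear_combination hup + hdown

lemma AuraOddAt.of_validUp (hp : AuraPieceE n A) {l r b : Label} (h : ValidUp l r b)
    (hl : AuraOddAt A l) (hr : AuraOddAt A r) : AuraOddAt A b := by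
  have h₁ := hp.opposite_sum_eq_zero h
  have h₂ := hp.opposite_sum_eq_zero h.rotate
  have h₃ := hp.opposite_sum_eq_zero h.rotate.rotate
  exact ⟨by linear_combination h₃ - hl.2.1 - hr.2.2, by linear_combination h₂ - hr.1 - hl.2.2,
    by linear_combination h₁ - hl.1 - hr.2.1⟩

lemma auraOddAt_of_le_seven (hA : AuraSimpleE n A) (hp : AuraPieceE n A) {a : Label}
    (ha : a ≤ 7) : AuraOddAt A a := by
  have h₀ := auraOddAt_of_lt_three hA (a := 0) (by norm_num)
  have h₁ := auraOddAt_of_lt_three hA (a := 1) (by norm_num)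
  have h₂ := auraOddAt_of_lt_three hA (a := 2) (by norm_num)
  have h₃ := h₀.of_validUp hp (b := 3) (by simp [ValidUp, basePieces]) h₁
  have h₄ := h₁.of_validUp hp (b := 4) (by simp [ValidUp, basePieces]) h₂
  have h₅ := h₀.of_validUp hp (b := 5) (by simp [ValidUp, basePieces]) h₂
  have h₆ := h₃.of_validUp hp (b := 6) (by simp [ValidUp, basePieces]) h₂
  have h₇ := h₀.of_validUp hp (b := 7) (by simp [ValidUp, basePieces]) h₄
  interval_cases a <;> assumption

end Aura

section Telescope

variable {M : Type*} [Ring M]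

lemma sum_ite_column_telescope (n x : ℕ) (c : M) (g : ℕ → M) :
    (∑ y ∈ range n, if 1 ≤ y ∧ x + y < n then c * (g y - g (y - 1)) else 0) =
      c * (g (n - 1 - x) - g 0) := by
  have hcol : (range n).filter (fun y => 1 ≤ y ∧ x + y < n) =
      (range (n - 1 - x)).map (addRightEmbedding 1) := by
    ext y
    simp only [mem_filter, mem_range, mem_map, addRightEmbedding_apply]
    constructor
    · exact fun hy => ⟨y - 1, by omega, by omega⟩
    · rintro ⟨k, hk, rfl⟩
      omega
  rw [← sum_filter, hcol, sum_map, ← mul_sum]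
  simp only [addRightEmbedding_apply, Nat.add_sub_cancel]
  rw [sum_range_sub]

lemma sum_ite_diagonal_telescope (n : ℕ) (c : ℕ → M) (g : ℕ → ℕ → M) :
    (∑ x ∈ range n, ∑ y ∈ range n,
        if 1 ≤ y ∧ x + y < n then c (x + y) * (g x y - g (x + 1) (y - 1)) else 0) =
      ∑ d ∈ range n, c d * (g 0 d - g d 0) := by
  have hrow (x : ℕ) : (∑ y ∈ range n,
      if 1 ≤ y ∧ x + y < n then c (x + y) * (g x y - g (x + 1) (y - 1)) else 0) =
      ∑ y ∈ range (n - x), if 1 ≤ y then c (x + y) * (g x y - g (x + 1) (y - 1)) else 0 := by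
    rw [← sum_filter, ← sum_filter]
    congr 1
    ext y
    simp only [mem_filter, mem_range]
    omega
  have hdiag (d : ℕ) : (∑ x ∈ range (d + 1),
      if 1 ≤ d - x then c (x + (d - x)) * (g x (d - x) - g (x + 1) (d - x - 1)) else 0) =
      ∑ x ∈ range d, c d * (g x (d - x) - g (x + 1) (d - (x + 1))) := by
    rw [sum_range_succ, Nat.sub_self, if_neg (by omega), add_zero]
    refine sum_congr rfl fun x hx => ?_
    rw [mem_range] at hx
    rw [if_pos (by omega), Nat.add_sub_cancel' hx.le, Nat.sub_sub]
  simp only [hrow, ← sum_range_diag_flip, hdiag, ← mul_sum]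
  refine sum_congr rfl fun d _ => ?_
  rw [sum_range_sub' (fun x => g x (d - x)), Nat.sub_zero, Nat.sub_self]

end Telescope

namespace EqvPuzzle

variable {n : ℕ} (P : EqvPuzzle n) {A : Fin 6 → ℕ → ERng n}

lemma labels_eq_of_not_isScabAt {x y : ℕ} (hy : 1 ≤ y) (hxy : x + y < n)
    (h : ¬ IsScabAt P x y) : P.ne (x + 1) (y - 1) = P.ne x y ∧ P.nw x (y - 1) = P.nw x y := by
  cases hEq : P.isEq x y with
  | true =>
    obtain ⟨hne, hnw, -⟩ := P.rhombus_equiv x y hy hxy hEq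
    exact ⟨hne.symm, hnw.symm⟩
  | false => exact not_not.mp fun hc => h ⟨hy, hxy, hEq, hc⟩

lemma ATscab_eq_of_auraOddAt {x y : ℕ} (hy : y ≠ 0) (hnw : AuraOddAt A (P.nw x (y - 1)))
    (hne : AuraOddAt A (P.ne (x + 1) (y - 1))) :
    ATscab P A x y = yvarE n (x + y) * (A 5 (P.ne x y) - A 5 (P.ne (x + 1) (y - 1))) +
      yvarE n x * (A 3 (P.nw x y) - A 3 (P.nw x (y - 1))) := by
  simp only [ATscab, if_neg hy]
  linear_combination yvarE n (x + y) * hne.1 + yvarE n x * hnw.2.1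

lemma ite_isScabAt_ATscab (hA : AuraSimpleE n A) (hp : AuraPieceE n A) {x y : ℕ}
    (hy : 1 ≤ y) (hxy : x + y < n) :
    (if IsScabAt P x y then ATscab P A x y else 0) =
      yvarE n (x + y) * (A 5 (P.ne x y) - A 5 (P.ne (x + 1) (y - 1))) +
        yvarE n x * (A 3 (P.nw x y) - A 3 (P.nw x (y - 1))) := by
  by_cases hs : IsScabAt P x y
  · obtain ⟨-, hdown⟩ := P.rhombus_tri x y hy hxy hs.2.2.1
    obtain ⟨hne, hnw, -⟩ := ValidUp.le_seven hdown
    rw [if_pos hs, P.ATscab_eq_of_auraOddAt (by omega) (auraOddAt_of_le_seven hA hp hnw)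
      (auraOddAt_of_le_seven hA hp hne)]
  · obtain ⟨hne, hnw⟩ := P.labels_eq_of_not_isScabAt hy hxy hs
    rw [if_neg hs, hne, hnw]
    ring

lemma sum_ATscab_eq_sum_border (hA : AuraSimpleE n A) (hp : AuraPieceE n A) :
    (∑ x ∈ range n, ∑ y ∈ range n, if IsScabAt P x y then ATscab P A x y else 0) =
      ∑ i ∈ range n, yvarE n i * (A 5 (P.ne 0 i) - A 5 (P.ne i 0) +
        (A 3 (P.nw i (n - 1 - i)) - A 3 (P.nw i 0))) := by
  have hsplit (x y : ℕ) : (if IsScabAt P x y then ATscab P A x y else 0) =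
      (if 1 ≤ y ∧ x + y < n then
        yvarE n (x + y) * (A 5 (P.ne x y) - A 5 (P.ne (x + 1) (y - 1))) else 0) +
      (if 1 ≤ y ∧ x + y < n then
        yvarE n x * (A 3 (P.nw x y) - A 3 (P.nw x (y - 1))) else 0) := by
    by_cases h : 1 ≤ y ∧ x + y < n
    · rw [if_pos h, if_pos h, P.ite_isScabAt_ATscab hA hp h.1 h.2]
    · rw [if_neg h, if_neg h, if_neg fun hs => h ⟨hs.1, hs.2.1⟩, add_zero]
  simp only [hsplit, sum_add_distrib, mul_add,
    sum_ite_diagonal_telescope n (yvarE n) (fun x y => A 5 (P.ne x y)),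
    sum_ite_column_telescope n _ (yvarE n _) (fun y => A 3 (P.nw _ y))]

end EqvPuzzle

theorem scab_aura_sum_general (n : ℕ)
    (u v w : ℕ → ℕ)
    (P : EqvPuzzle n) (hP : HasBoundary P u v w)
    (A : Fin 6 → ℕ → ERng n) (hA : AuraSimpleE n A) (hp : AuraPieceE n A) :
    (∑ x ∈ Finset.range n, ∑ y ∈ Finset.range n,
        if IsScabAt P x y then ATscab P A x y else 0) =
      CstrE n u * MvPolynomial.C (zet ^ 11) +
        CstrE n v * MvPolynomial.C (zet ^ 7) +
        CstrE n w * MvPolynomial.C (zet ^ 3) := by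
  rw [P.sum_ATscab_eq_sum_border hA hp]
  simp only [CstrE, sum_mul, ← sum_add_distrib]
  refine sum_congr rfl fun i hi => ?_
  rw [mem_range] at hi
  obtain ⟨hu, hv, hw⟩ := hP
  obtain ⟨su, sv, sw⟩ := P.boundary_simple
  have hbottom := (hp _ _ _ (P.bottom_valid i hi)).1
  have h5 : A 5 (P.ne 0 i) = MvPolynomial.C (zet ^ 11) * dvarE n (P.ne 0 i) :=
    hA 5 _ (su i hi)
  have h3 : A 3 (P.nw i (n - 1 - i)) = MvPolynomial.C (zet ^ 7) * dvarE n (P.nw i (n - 1 - i)) :=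
    hA 3 _ (sv i hi)
  have h1 : A 1 (P.hl i 0) = MvPolynomial.C (zet ^ 3) * dvarE n (P.hl i 0) := hA 1 _ (sw i hi)
  rw [← hu i hi, ← hv i hi, ← hw i hi]
  linear_combination yvarE n i * (h5 + h3 - hbottom + h1)

theorem scab_aura_sum (n a b : ℕ) (hab : a ≤ b) (hbn : b ≤ n)
    (u v w : ℕ → ℕ) (hu : Is012 n a b u) (hv : Is012 n a b v)
    (hw : Is012 n a b w)
    (P : EqvPuzzle n) (hP : HasBoundary P u v w)
    (A : Fin 6 → ℕ → ERng n) (hA : AuraSimpleE n A) (hp : AuraPieceE n A) :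
    (∑ x ∈ Finset.range n, ∑ y ∈ Finset.range n,
        if IsScabAt P x y then ATscab P A x y else 0) =
      CstrE n u * MvPolynomial.C (zet ^ 11) +
        CstrE n v * MvPolynomial.C (zet ^ 7) +
        CstrE n w * MvPolynomial.C (zet ^ 3) :=
  scab_aura_sum_general n u v w P hP A hA hp
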